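/- Let F = {2^{m+2} − 1 : m ∈ ℕ} and A = ℕ \ F. Then for every integer n ≥ 1, r(3,A,n) − r(3,A,n−1) ≥ (n + 1) − 3⌊log₂(n+1)⌋ − 3, where ⌊log₂ m⌋ denotes the integer part of the base-2 logarithm of m. -/

import Mathlib

/-!
Let `S = ∑ Xⁿ` and `G = ∑_{x ∈ F} Xˣ`. The generating series of `A = ℕ \ F` is `S - G`, so that of
`r 3 A` is `(S - G)³`, and since `(1 - X) S = 1`, that of `r 3 A n - r 3 A (n - 1)` is
`(1 - X)(S - G)³ = S² - 3 S G + 3 G² - (1 - X) G³`. Its `n`-th coefficient is therefore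
`(n + 1) - 3 #(F ∩ [0, n]) + 3 r 2 F n - (r 3 F n - r 3 F (n - 1))`, where
`#(F ∩ [0, n]) ≤ log₂ (n + 1) - 1`. Finally `r 3 F n ≤ 6`: writing the elements of `F` as
`2ᵃ - 1`, such a triple is a representation `n + 3 = 2ᵃ + 2ᵇ + 2ᶜ`, and by uniqueness of binary
expansions there are at most six of them.
-/

/-- `r k A n` is the number of `k`-tuples `(c₁, …, c_k)` of elements of `A`
with `c₁ + ⋯ + c_k = n`. -/
noncomputable def r (k : ℕ) (A : Set ℕ) (n : ℕ) : ℕ :=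
  Set.ncard {c : Fin k → ℕ | (∀ i, c i ∈ A) ∧ ∑ i, c i = n}

open Finset PowerSeries

namespace PowerSeries

section CommSemiring

variable {R : Type*} [CommSemiring R]

theorem coeff_pow_eq_sum_antidiagonalTuple (φ : R⟦X⟧) (k n : ℕ) :
    coeff n (φ ^ k) = ∑ c ∈ Nat.antidiagonalTuple k n, ∏ i, coeff (c i) φ := by
  rw [← Fin.prod_const, coeff_prod]
  refine sum_equiv Finsupp.equivFunOnFinite (fun l => ?_) (fun _ _ => rfl)
  simp [Nat.mem_antidiagonalTuple]

noncomputable def indicatorSeries (R : Type*) [CommSemiring R] (A : Set ℕ) : R⟦X⟧ :=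
  mk (A.indicator 1)

theorem coeff_indicatorSeries_pow (A : Set ℕ) (k n : ℕ) :
    coeff n (indicatorSeries R A ^ k) = r k A n := by
  classical
  simp only [coeff_pow_eq_sum_antidiagonalTuple, indicatorSeries, coeff_mk, Set.indicator_apply,
    Pi.one_apply, prod_boole, mem_univ, true_implies, sum_boole]
  rw [r, ← Set.ncard_coe_finset]
  congr
  ext c
  simp [Nat.mem_antidiagonalTuple, and_comm]

theorem coeff_mk_one_mul_indicatorSeries (A : Set ℕ) (n : ℕ) :
    coeff n ((mk 1 : R⟦X⟧) * indicatorSeries R A) = (A ∩ Set.Iic n).ncard := by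
  classical
  rw [mul_comm, coeff_mul, Nat.sum_antidiagonal_eq_sum_range_succ_mk]
  simp only [indicatorSeries, coeff_mk, Pi.one_apply, mul_one, Set.indicator_apply, sum_boole]
  rw [← Set.ncard_coe_finset]
  congr
  ext x
  simp [and_comm]

end CommSemiring

section CommRing

variable (R : Type*) [CommRing R]

theorem indicatorSeries_univ_diff (F : Set ℕ) :
    indicatorSeries R (Set.univ \ F) = mk 1 - indicatorSeries R F := by
  ext n
  simp [indicatorSeries, ← Set.compl_eq_univ_sdiff, Set.indicator_compl]

theorem coeff_succ_one_sub_X_mul (φ : R⟦X⟧) (n : ℕ) :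
    coeff (n + 1) ((1 - X) * φ) = coeff (n + 1) φ - coeff n φ := by
  rw [sub_mul, one_mul, map_sub, coeff_succ_X_mul]

end CommRing

end PowerSeries

theorem r_three_univ_diff_succ_sub (F : Set ℕ) (m : ℕ) :
    (r 3 (Set.univ \ F) (m + 1) : ℤ) - r 3 (Set.univ \ F) m =
      (m + 2) - 3 * (F ∩ Set.Iic (m + 1)).ncard + 3 * r 2 F (m + 1) -
        (r 3 F (m + 1) - r 3 F m) := by
  set S : ℤ⟦X⟧ := mk 1
  set G := indicatorSeries ℤ F
  have key : (1 - X) * (S - G) ^ 3 = S ^ 2 - 3 • (S * G) + 3 • G ^ 2 - (1 - X) * G ^ 3 := by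
    linear_combination (S ^ 2 - 3 * S * G + 3 * G ^ 2) * mk_one_mul_one_sub_eq_one ℤ
  have hS2 : coeff (m + 1) (S ^ 2) = (m + 2 : ℤ) := by
    rw [show S ^ 2 = S ^ (1 + 1) from rfl, mk_one_pow_eq_mk_choose_add, coeff_mk]
    push_cast [Nat.choose_one_right]
    ring
  rw [← coeff_indicatorSeries_pow, ← coeff_indicatorSeries_pow, indicatorSeries_univ_diff,
    ← coeff_succ_one_sub_X_mul, key]
  simp only [map_sub, map_add, map_nsmul, hS2]
  simp only [S, G, coeff_mk_one_mul_indicatorSeries, coeff_succ_one_sub_X_mul,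
    coeff_indicatorSeries_pow, nsmul_eq_mul]
  push_cast
  ring

theorem fin_three_eq_vecCons {α : Type*} (e : Fin 3 → α) : e = ![e 0, e 1, e 2] := by
  ext i; fin_cases i <;> rfl

namespace Nat

theorem two_pow_add_two_pow_self (a : ℕ) : 2 ^ a + 2 ^ a = 2 ^ (a + 1) := by
  rw [← two_mul, pow_succ']

theorem mem_bitIndices_two_pow_add_two_pow {a b x : ℕ} :
    x ∈ (2 ^ a + 2 ^ b).bitIndices ↔ (a ≠ b ∧ (x = a ∨ x = b)) ∨ (a = b ∧ x = a + 1) := by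
  rcases eq_or_ne a b with rfl | hab
  · simp [two_pow_add_two_pow_self]
  · rw [← List.mem_toFinset, ← sum_pair hab, toFinset_bitIndices_sum_two_pow]
    simp [hab]

theorem mem_bitIndices_two_pow_add_two_pow_add_two_pow {a b c x : ℕ} (hab : a ≠ b) (hbc : b ≠ c)
    (hac : a ≠ c) : x ∈ (2 ^ a + 2 ^ b + 2 ^ c).bitIndices ↔ x = a ∨ x = b ∨ x = c := by
  have hsum : ∑ i ∈ {a, b, c}, 2 ^ i = 2 ^ a + 2 ^ b + 2 ^ c := by
    rw [sum_insert (by simp [hab, hac]), sum_pair hbc, add_assoc]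
  rw [← List.mem_toFinset, ← hsum, toFinset_bitIndices_sum_two_pow]
  simp

theorem two_pow_add_two_pow_inj {a b c d : ℕ} (h : 2 ^ a + 2 ^ b = 2 ^ c + 2 ^ d) :
    (a = c ∧ b = d) ∨ (a = d ∧ b = c) := by
  have hmem (x : ℕ) : ((a ≠ b ∧ (x = a ∨ x = b)) ∨ (a = b ∧ x = a + 1)) ↔
      ((c ≠ d ∧ (x = c ∨ x = d)) ∨ (c = d ∧ x = c + 1)) := by
    rw [← mem_bitIndices_two_pow_add_two_pow, ← mem_bitIndices_two_pow_add_two_pow, h]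
  by_cases hab : a = b <;> by_cases hcd : c = d <;> simp only [hab, hcd, ne_eq, not_true_eq_false,
    not_false_eq_true, false_and, true_and, false_or, or_false] at hmem
  · have := hmem (a + 1); omega
  · have := hmem (a + 1); have := hmem c; have := hmem d; omega
  · have := hmem (c + 1); have := hmem a; have := hmem b; omega
  · have := hmem a; have := hmem b; have := hmem c; have := hmem d; omega

theorem two_pow_add_two_pow_add_two_pow_ne {a b c u v : ℕ} (hab : a ≠ b) (hbc : b ≠ c)
    (hac : a ≠ c) : 2 ^ a + 2 ^ b + 2 ^ c ≠ 2 ^ u + 2 ^ v := by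
  intro h
  have hmem (x : ℕ) : (x = a ∨ x = b ∨ x = c) ↔
      ((u ≠ v ∧ (x = u ∨ x = v)) ∨ (u = v ∧ x = u + 1)) := by
    rw [← mem_bitIndices_two_pow_add_two_pow_add_two_pow hab hbc hac,
      ← mem_bitIndices_two_pow_add_two_pow, h]
  have := hmem a; have := hmem b; have := hmem c
  omega

theorem eq_perm_of_two_pow_add_two_pow_add_two_pow_eq {a b c x y z : ℕ} (hab : a ≠ b)
    (hbc : b ≠ c) (hac : a ≠ c) (h : 2 ^ x + 2 ^ y + 2 ^ z = 2 ^ a + 2 ^ b + 2 ^ c) :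
    (x = a ∧ y = b ∧ z = c) ∨ (x = a ∧ y = c ∧ z = b) ∨ (x = b ∧ y = a ∧ z = c) ∨
      (x = b ∧ y = c ∧ z = a) ∨ (x = c ∧ y = a ∧ z = b) ∨ (x = c ∧ y = b ∧ z = a) := by
  have hne (u v : ℕ) : 2 ^ a + 2 ^ b + 2 ^ c ≠ 2 ^ (u + 1) + 2 ^ v :=
    two_pow_add_two_pow_add_two_pow_ne hab hbc hac
  have hxy : x ≠ y := fun hxy => hne y z (by have := two_pow_add_two_pow_self y; subst hxy; omega)
  have hyz : y ≠ z := fun hyz => hne z x (by have := two_pow_add_two_pow_self z; subst hyz; omega)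
  have hxz : x ≠ z := fun hxz => hne z y (by have := two_pow_add_two_pow_self z; subst hxz; omega)
  have hmem (w : ℕ) : (w = x ∨ w = y ∨ w = z) ↔ (w = a ∨ w = b ∨ w = c) := by
    rw [← mem_bitIndices_two_pow_add_two_pow_add_two_pow hxy hyz hxz,
      ← mem_bitIndices_two_pow_add_two_pow_add_two_pow hab hbc hac, h]
  obtain rfl | rfl | rfl := (hmem x).1 (by simp) <;>
    obtain rfl | rfl | rfl := (hmem y).1 (by simp) <;>
    obtain rfl | rfl | rfl := (hmem z).1 (by simp) <;> simp_all

theorem eq_of_two_pow_add_two_pow_add_two_pow_eq {u v x y z : ℕ}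
    (h : 2 ^ x + 2 ^ y + 2 ^ z = 2 ^ (u + 1) + 2 ^ v) :
    (x = u ∧ y = u ∧ z = v) ∨ (x = u ∧ y = v ∧ z = u) ∨ (x = v ∧ y = u ∧ z = u) ∨
      (x = v - 1 ∧ y = v - 1 ∧ z = u + 1) ∨ (x = v - 1 ∧ y = u + 1 ∧ z = v - 1) ∨
      (x = u + 1 ∧ y = v - 1 ∧ z = v - 1) := by
  have := two_pow_add_two_pow_self
  by_cases hxy : x = y
  · subst hxy
    rcases two_pow_add_two_pow_inj (a := x + 1) (b := z) (c := u + 1) (d := v) (by omega) with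
      ⟨_, rfl⟩ | ⟨rfl, rfl⟩ <;> simp_all
  by_cases hyz : y = z
  · subst hyz
    rcases two_pow_add_two_pow_inj (a := y + 1) (b := x) (c := u + 1) (d := v) (by omega) with
      ⟨_, rfl⟩ | ⟨rfl, rfl⟩ <;> simp_all
  by_cases hxz : x = z
  · subst hxz
    rcases two_pow_add_two_pow_inj (a := x + 1) (b := y) (c := u + 1) (d := v) (by omega) with
      ⟨_, rfl⟩ | ⟨rfl, rfl⟩ <;> simp_all
  exact absurd h (two_pow_add_two_pow_add_two_pow_ne hxy hyz hxz)

theorem encard_setOf_sum_two_pow_eq_le (M : ℕ) :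
    {e : Fin 3 → ℕ | ∑ i, 2 ^ e i = M}.encard ≤ 6 := by
  suffices ∃ s : Finset (Fin 3 → ℕ), s.card ≤ 6 ∧
      ∀ e : Fin 3 → ℕ, 2 ^ e 0 + 2 ^ e 1 + 2 ^ e 2 = M → e ∈ s by
    obtain ⟨s, hs, hcover⟩ := this
    calc _ ≤ (s : Set (Fin 3 → ℕ)).encard :=
          Set.encard_le_encard fun e he => hcover e (by simpa [Fin.sum_univ_three] using he)
      _ ≤ 6 := by rw [Set.encard_coe_eq_coe_finsetCard]; exact_mod_cast hs
  by_cases hsol : ∃ a b c, 2 ^ a + 2 ^ b + 2 ^ c = M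
  swap
  · exact ⟨∅, by simp, fun e he => absurd ⟨_, _, _, he⟩ hsol⟩
  obtain ⟨a, b, c, hM⟩ := hsol
  by_cases hdist : a ≠ b ∧ b ≠ c ∧ a ≠ c
  · obtain ⟨hab, hbc, hac⟩ := hdist
    refine ⟨{![a, b, c], ![a, c, b], ![b, a, c], ![b, c, a], ![c, a, b], ![c, b, a]},
      card_le_six, fun e he => ?_⟩
    rw [fin_three_eq_vecCons e]
    simpa [Matrix.vecCons_inj] using
      eq_perm_of_two_pow_add_two_pow_add_two_pow_eq hab hbc hac (he.trans hM.symm)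
  · obtain ⟨u, v, huv⟩ : ∃ u v, M = 2 ^ (u + 1) + 2 ^ v := by
      have := two_pow_add_two_pow_self
      by_cases hab : a = b
      · exact ⟨a, c, by subst hab; omega⟩
      by_cases hbc : b = c
      · exact ⟨b, a, by subst hbc; omega⟩
      obtain rfl : a = c := by tauto
      exact ⟨a, b, by omega⟩
    refine ⟨{![u, u, v], ![u, v, u], ![v, u, u],
      ![v - 1, v - 1, u + 1], ![v - 1, u + 1, v - 1], ![u + 1, v - 1, v - 1]}, card_le_six,
      fun e he => ?_⟩
    rw [fin_three_eq_vecCons e]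
    simpa [Matrix.vecCons_inj] using eq_of_two_pow_add_two_pow_add_two_pow_eq (he.trans huv)

end Nat

theorem r_three_le_six {F : Set ℕ} (hF : ∀ x ∈ F, ∃ a, x + 1 = 2 ^ a) (n : ℕ) : r 3 F n ≤ 6 := by
  have hsub : {c : Fin 3 → ℕ | (∀ i, c i ∈ F) ∧ ∑ i, c i = n} ⊆
      (fun e i => 2 ^ e i - 1) '' {e : Fin 3 → ℕ | ∑ i, 2 ^ e i = n + 3} := by
    rintro c ⟨hcF, rfl⟩
    choose e he using fun i => hF (c i) (hcF i)
    refine ⟨e, ?_, funext fun i => by simp [← he i]⟩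
    simp [← he, sum_add_distrib]
  refine ENat.toNat_le_of_le_natCast ?_
  calc _ ≤ _ := Set.encard_le_encard hsub
    _ ≤ _ := Set.encard_image_le _ _
    _ ≤ 6 := Nat.encard_setOf_sum_two_pow_eq_le _

theorem ncard_mersenne_inter_Iic_le (n : ℕ) :
    ({x | ∃ m : ℕ, x = 2 ^ (m + 2) - 1} ∩ Set.Iic n).ncard ≤ Nat.log 2 (n + 1) - 1 := by
  have hsub : {x | ∃ m : ℕ, x = 2 ^ (m + 2) - 1} ∩ Set.Iic n ⊆
      ((range (Nat.log 2 (n + 1) - 1)).image fun m => 2 ^ (m + 2) - 1 : Finset ℕ) := by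
    rintro _ ⟨⟨m, rfl⟩, hmn⟩
    have hpow : 2 ^ (m + 2) ≤ n + 1 := by
      have := Nat.one_le_two_pow (n := m + 2)
      rw [Set.mem_Iic] at hmn
      omega
    have := Nat.le_log_of_pow_le one_lt_two hpow
    simp only [coe_image, coe_range, Set.mem_image, Set.mem_Iio]
    exact ⟨m, by omega, rfl⟩
  calc _ ≤ _ := Set.ncard_le_ncard hsub (Finset.finite_toSet _)
    _ ≤ _ := by rw [Set.ncard_coe_finset]; exact card_image_le.trans (card_range _).le

theorem stmt_8 (F : Set ℕ) (hF : F = {x : ℕ | ∃ m : ℕ, x = 2 ^ (m + 2) - 1})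
    (A : Set ℕ) (hA : A = Set.univ \ F) :
    ∀ n : ℕ, 1 ≤ n →
      ((n : ℤ) + 1) - 3 * (Nat.log 2 (n + 1) : ℤ) - 3 ≤
        (r 3 A n : ℤ) - (r 3 A (n - 1) : ℤ) := by
  subst hA hF
  intro n hn
  obtain ⟨m, rfl⟩ := Nat.exists_eq_add_of_le' hn
  rw [Nat.add_sub_cancel, r_three_univ_diff_succ_sub]
  have hcount := ncard_mersenne_inter_Iic_le (m + 1)
  have hlog : 1 ≤ Nat.log 2 (m + 1 + 1) := Nat.log_pos one_lt_two (by omega)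
  have htriples := r_three_le_six (F := {x | ∃ k : ℕ, x = 2 ^ (k + 2) - 1})
    (fun _ ⟨k, hk⟩ => ⟨k + 2, by have := Nat.one_le_two_pow (n := k + 2); omega⟩) (m + 1)
  push_cast
  omega
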